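/- arXiv:1608.03528 — 5 statements merged into one kernel-verified Lean document; each statement's English description precedes it below -/
import Mathlib

section
/- Let f be holomorphic on the open disk O(ζ₀, δ) centered at a point ζ₀ of the unit circle 𝕋 with radius δ > 0. If there is a sequence (ζ_k) in 𝕋 \ {ζ₀} with ζ_k → ζ₀ and |f(ζ_k)| = 1 for all k, then f maps O(ζ₀, δ) ∩ 𝕋 into 𝕋. -/
open Complex ComplexConjugate Filter Metric Set Real Topology

/-! Reflection in the unit circle turns `f` into `g w = conj (f (1 / conj w))`, again
holomorphic, and `F = f * g` is holomorphic near the circle with `F = |f|²` on it. So `F = 1` at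
points accumulating at `ζ₀`, hence on a whole connected neighbourhood of `ζ₀` by the identity
theorem, and this neighbourhood contains the arc of the circle from `ζ₀` to any `z` of the disk. -/

noncomputable def unitCircleReflection (w : ℂ) : ℂ := (conj w)⁻¹

lemma unitCircleReflection_of_norm_eq_one {w : ℂ} (hw : ‖w‖ = 1) :
    unitCircleReflection w = w := by
  rw [unitCircleReflection, inv_eq_conj (by rwa [norm_conj]), conj_conj]

lemma continuousOn_unitCircleReflection : ContinuousOn unitCircleReflection {0}ᶜ :=
  ContinuousOn.inv₀ (f := fun w => conj w) (by fun_prop) fun _ hw => by simpa using hw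

lemma DifferentiableAt.conj_comp_unitCircleReflection {f : ℂ → ℂ} {w : ℂ} (hw : w ≠ 0)
    (hf : DifferentiableAt ℂ f (unitCircleReflection w)) :
    DifferentiableAt ℂ (fun w => conj (f (unitCircleReflection w))) w := by
  have hreflect : unitCircleReflection = conj ∘ Inv.inv := by
    ext1 w; simp [unitCircleReflection, map_inv₀]
  rw [hreflect] at hf ⊢
  exact (differentiableAt_conj_conj_iff.mpr hf).comp w (differentiableAt_inv hw)

lemma norm_exp_I_mul_ofReal_sub_one_le_of_abs_le {s t : ℝ} (hst : |s| ≤ |t|) (ht : |t| ≤ π) :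
    ‖exp (I * s) - 1‖ ≤ ‖exp (I * t) - 1‖ := by
  have hs2 : |s / 2| ≤ π := by rw [abs_div, abs_two]; linarith [abs_nonneg s]
  have ht2 : |t / 2| ≤ π := by rw [abs_div, abs_two]; linarith [abs_nonneg t]
  simp only [norm_exp_I_mul_ofReal_sub_one, norm_mul, Real.norm_eq_abs]
  rw [Real.abs_sin_eq_sin_abs_of_abs_le_pi hs2,
    Real.abs_sin_eq_sin_abs_of_abs_le_pi ht2, abs_div, abs_div, abs_two]
  gcongr
  exact Real.sin_le_sin_of_le_of_le_pi_div_two (by linarith [abs_nonneg s, Real.pi_pos])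
    (by linarith) (by linarith)

lemma mem_connectedComponentIn_ball_inter_sphere {ζ₀ z : ℂ} {δ : ℝ} (hζ₀ : ‖ζ₀‖ = 1)
    (hz : ‖z‖ = 1) (hzδ : z ∈ ball ζ₀ δ) :
    z ∈ connectedComponentIn (ball ζ₀ δ ∩ sphere 0 1) ζ₀ := by
  set γ : ℝ → ℂ := fun s => ζ₀ * exp (I * s)
  set t := arg (z / ζ₀)
  have hγt : γ t = z := by
    have h := norm_mul_exp_arg_mul_I (z / ζ₀)
    rw [norm_div, hz, hζ₀, div_one, ofReal_one, one_mul] at h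
    simp only [γ, t, mul_comm I, h]
    field_simp [norm_ne_zero_iff.mp (hζ₀.trans_ne one_ne_zero)]
  have hdist : ∀ s, dist (γ s) ζ₀ = ‖exp (I * s) - 1‖ := fun s => by
    rw [dist_eq_norm, ← mul_sub_one, norm_mul, hζ₀, one_mul]
  have harc : γ '' uIcc 0 t ⊆ ball ζ₀ δ ∩ sphere 0 1 := by
    rintro _ ⟨s, hs, rfl⟩
    refine ⟨?_, by simp [γ, hζ₀, mul_comm I]⟩
    have hst : |s| ≤ |t| := by simpa using abs_sub_left_of_mem_uIcc hs
    rw [mem_ball, hdist]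
    calc ‖exp (I * s) - 1‖ ≤ ‖exp (I * t) - 1‖ :=
          norm_exp_I_mul_ofReal_sub_one_le_of_abs_le hst (abs_arg_le_pi _)
      _ = dist z ζ₀ := by rw [← hdist, hγt]
      _ < δ := hzδ
  exact (isPreconnected_uIcc.image γ (by fun_prop)).subset_connectedComponentIn
    ⟨0, left_mem_uIcc, by simp [γ]⟩ harc ⟨t, right_mem_uIcc, hγt⟩

def reflectionInvariantCore (S : Set ℂ) : Set ℂ := S ∩ ({0}ᶜ ∩ unitCircleReflection ⁻¹' S)

lemma isOpen_reflectionInvariantCore {S : Set ℂ} (hS : IsOpen S) :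
    IsOpen (reflectionInvariantCore S) :=
  hS.inter (continuousOn_unitCircleReflection.isOpen_inter_preimage isOpen_compl_singleton hS)

lemma DifferentiableOn.mul_conj_comp_unitCircleReflection {f : ℂ → ℂ} {S : Set ℂ}
    (hS : IsOpen S) (hf : DifferentiableOn ℂ f S) :
    DifferentiableOn ℂ (fun w => f w * conj (f (unitCircleReflection w)))
      (reflectionInvariantCore S) := by
  rintro w ⟨hwS, hw0, hwR⟩
  exact ((hf.differentiableAt (hS.mem_nhds hwS)).mul
    ((hf.differentiableAt (hS.mem_nhds hwR)).conj_comp_unitCircleReflection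
      hw0)).differentiableWithinAt

lemma inter_sphere_subset_reflectionInvariantCore (S : Set ℂ) :
    S ∩ sphere 0 1 ⊆ reflectionInvariantCore S := by
  rintro w ⟨hwS, hw⟩
  rw [mem_sphere_zero_iff_norm] at hw
  refine ⟨hwS, by simpa using ne_zero_of_norm_ne_zero (hw.trans_ne one_ne_zero), ?_⟩
  rwa [mem_preimage, unitCircleReflection_of_norm_eq_one hw]

theorem norm_eq_one_on_connectedComponentIn_sphere {f : ℂ → ℂ} {S : Set ℂ} (hS : IsOpen S)
    (hf : DifferentiableOn ℂ f S) {ζ₀ : ℂ} (hfreq : ∃ᶠ w in 𝓝[≠] ζ₀, ‖w‖ = 1 ∧ ‖f w‖ = 1) :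
    ∀ z ∈ connectedComponentIn (S ∩ sphere 0 1) ζ₀, ‖f z‖ = 1 := by
  intro z hz
  set V := reflectionInvariantCore S
  set F : ℂ → ℂ := fun w => f w * conj (f (unitCircleReflection w))
  have hF_circle : ∀ w, ‖w‖ = 1 → F w = (‖f w‖ ^ 2 : ℝ) := fun w hw => by
    simp only [F, unitCircleReflection_of_norm_eq_one hw, mul_conj', ofReal_pow]
  have hcircle_V := inter_sphere_subset_reflectionInvariantCore S
  have hF : AnalyticOnNhd ℂ F (connectedComponentIn V ζ₀) :=
    ((hf.mul_conj_comp_unitCircleReflection hS).mono (connectedComponentIn_subset V ζ₀)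
      ).analyticOnNhd (isOpen_reflectionInvariantCore hS).connectedComponentIn
  have hζ₀ : ζ₀ ∈ connectedComponentIn V ζ₀ :=
    mem_connectedComponentIn (hcircle_V (connectedComponentIn_nonempty_iff.mp ⟨z, hz⟩))
  have hFz : F z = 1 :=
    hF.eqOn_of_preconnected_of_frequently_eq (analyticOnNhd_const (v := 1))
      isPreconnected_connectedComponentIn hζ₀
      (hfreq.mono fun w ⟨hw, hfw⟩ => by simp [hF_circle w hw, hfw])
      (connectedComponentIn_mono ζ₀ hcircle_V hz)
  have hz1 : ‖z‖ = 1 := mem_sphere_zero_iff_norm.mp (connectedComponentIn_subset _ ζ₀ hz).2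
  rw [hF_circle z hz1] at hFz
  exact (pow_eq_one_iff_of_nonneg (norm_nonneg _) two_ne_zero).mp (by exact_mod_cast hFz)

theorem unimodular_on_arc_general
    (ζ₀ : ℂ) (hζ₀ : ‖ζ₀‖ = 1) (δ : ℝ)
    (f : ℂ → ℂ) (hf : DifferentiableOn ℂ f (Metric.ball ζ₀ δ))
    (ζ : ℕ → ℂ)
    (hcirc : ∀ k, ‖ζ k‖ = 1) (hne : ∀ k, ζ k ≠ ζ₀)
    (hlim : Tendsto ζ atTop (nhds ζ₀))
    (hval : ∀ k, ‖f (ζ k)‖ = 1) :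
    ∀ z ∈ Metric.ball ζ₀ δ, ‖z‖ = 1 → ‖f z‖ = 1 := by
  intro z hz hz1
  have hζ_punctured : Tendsto ζ atTop (𝓝[≠] ζ₀) :=
    tendsto_nhdsWithin_iff.mpr ⟨hlim, .of_forall hne⟩
  exact norm_eq_one_on_connectedComponentIn_sphere isOpen_ball hf
    (hζ_punctured.frequently (.of_forall fun k => ⟨hcirc k, hval k⟩)) z
    (mem_connectedComponentIn_ball_inter_sphere hζ₀ hz1 hz)

theorem unimodular_on_arc
    (ζ₀ : ℂ) (hζ₀ : ‖ζ₀‖ = 1) (δ : ℝ) (hδ : 0 < δ)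
    (f : ℂ → ℂ) (hf : DifferentiableOn ℂ f (Metric.ball ζ₀ δ))
    (ζ : ℕ → ℂ) (hmem : ∀ k, ζ k ∈ Metric.ball ζ₀ δ)
    (hcirc : ∀ k, ‖ζ k‖ = 1) (hne : ∀ k, ζ k ≠ ζ₀)
    (hlim : Tendsto ζ atTop (nhds ζ₀))
    (hval : ∀ k, ‖f (ζ k)‖ = 1) :
    ∀ z ∈ Metric.ball ζ₀ δ, ‖z‖ = 1 → ‖f z‖ = 1 :=
  unimodular_on_arc_general ζ₀ hζ₀ δ f hf ζ hcirc hne hlim hval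
end

section
/- Let f be a nonconstant holomorphic function on a domain containing points a and b with f(a) = f(b). Then for every sufficiently small ε > 0 there exist open Jordan neighborhoods W₁ of a and W₂ of b such that the restrictions f|_{W₁} and f|_{W₂} are proper holomorphic maps onto the disk f(a) + ε𝔻. -/
/-!
Near a point `a` where `f` is not locally constant, `f = f a + φ ^ n` for some `n ≠ 0` and a local
biholomorphism `φ` with `φ a = 0` (take an analytic `n`-th root of `(f - f a) / (z - a) ^ n`). For
small `s`, `W = φ⁻¹(ball 0 s)` is then a topological disk, and `f` on `W` is `w ↦ f a + w ^ n` on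
`ball 0 s`, a proper map onto `ball (f a) (s ^ n)`. Doing this at `a` and at `b` with a common
radius gives the theorem, since `f a = f b`.
-/

open Complex Metric Set Filter
open scoped Topology

namespace Complex

theorem add_pow_surjective (c : ℂ) {n : ℕ} (hn : n ≠ 0) :
    Function.Surjective fun w : ℂ => c + w ^ n := fun z => by
  obtain ⟨w, hw⟩ := IsAlgClosed.exists_pow_nat_eq (z - c) (Nat.pos_of_ne_zero hn)
  exact ⟨w, by simp only [hw, add_sub_cancel]⟩

theorem preimage_add_pow_ball (c : ℂ) {n : ℕ} (hn : n ≠ 0) {s : ℝ} (hs : 0 ≤ s) :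
    (fun w : ℂ => c + w ^ n) ⁻¹' ball c (s ^ n) = ball 0 s := by
  ext w
  simp [dist_eq_norm, pow_lt_pow_iff_left₀ (norm_nonneg w) hs hn]

theorem image_add_pow_ball (c : ℂ) {n : ℕ} (hn : n ≠ 0) {s : ℝ} (hs : 0 ≤ s) :
    (fun w : ℂ => c + w ^ n) '' ball 0 s = ball c (s ^ n) := by
  rw [← preimage_add_pow_ball c hn hs, image_preimage_eq _ (add_pow_surjective c hn)]

end Complex

theorem Metric.nonempty_homeomorph_ball {E : Type*} [NormedAddCommGroup E] [NormedSpace ℝ E]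
    (c : E) {r : ℝ} (hr : 0 < r) : Nonempty (ball c r ≃ₜ E) :=
  ⟨((Homeomorph.setCongr (OpenPartialHomeomorph.univBall_source c r).symm).trans
    ((OpenPartialHomeomorph.univBall c r).toHomeomorphSourceTarget.trans
      (Homeomorph.setCongr (OpenPartialHomeomorph.univBall_target c hr)))).symm.trans
    (Homeomorph.Set.univ E)⟩

namespace OpenPartialHomeomorph

variable {X Y : Type*} [TopologicalSpace X] [TopologicalSpace Y] (e : OpenPartialHomeomorph X Y)
  {A B : Set Y}

theorem symm_image_inter_preimage_of_subset (hB : B ⊆ e.target) (hAB : A ⊆ B) :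
    e.symm '' B ∩ e ⁻¹' A = e.symm '' A := by
  rw [e.symm_image_eq_source_inter_preimage hB,
    e.symm_image_eq_source_inter_preimage (hAB.trans hB), inter_assoc, ← preimage_inter,
    inter_eq_right.mpr hAB]

theorem isCompact_symm_image_inter_preimage (hB : B ⊆ e.target) (hAB : A ⊆ B)
    (hA : IsCompact A) : IsCompact (e.symm '' B ∩ e ⁻¹' A) := by
  rw [e.symm_image_inter_preimage_of_subset hB hAB]
  exact hA.image_of_continuousOn (e.continuousOn_symm.mono (hAB.trans hB))

theorem nonempty_homeomorph_symm_image (hB : B ⊆ e.target) : Nonempty (e.symm '' B ≃ₜ B) :=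
  ⟨e.homeomorphOfImageSubsetSource ((e.mapsTo_symm.mono_left hB).image_subset)
    (e.image_symm_image_of_subset_target hB)⟩

end OpenPartialHomeomorph

theorem AnalyticAt.exists_eventuallyEq_pow {g : ℂ → ℂ} {a : ℂ} (hg : AnalyticAt ℂ g a)
    (hga : g a ≠ 0) {n : ℕ} (hn : n ≠ 0) :
    ∃ h : ℂ → ℂ, AnalyticAt ℂ h a ∧ h a ≠ 0 ∧ ∀ᶠ z in 𝓝 a, h z ^ n = g z := by
  set c := g a ^ (n⁻¹ : ℂ)
  have hc : c ^ n = g a := cpow_nat_inv_pow _ hn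
  -- normalising by `g a` keeps the base of `cpow` near `1`, inside the slit plane
  refine ⟨fun z => c * (g z / g a) ^ (n⁻¹ : ℂ), ?_, ?_, ?_⟩
  · exact analyticAt_const.mul ((hg.div analyticAt_const hga).cpow analyticAt_const
      (by simp [div_self hga]))
  · have : c ≠ 0 := fun h => hga (by rw [← hc, h, zero_pow hn])
    simpa [div_self hga] using this
  · refine Eventually.of_forall fun z => ?_
    rw [mul_pow, hc, cpow_nat_inv_pow _ hn, mul_div_cancel₀ _ hga]

theorem AnalyticAt.exists_eventuallyEq_add_pow {f : ℂ → ℂ} {a : ℂ} (hf : AnalyticAt ℂ f a)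
    (hnc : ¬ ∀ᶠ z in 𝓝 a, f z = f a) :
    ∃ n ≠ 0, ∃ φ : ℂ → ℂ, ∃ c ≠ 0, HasStrictDerivAt φ c a ∧ φ a = 0 ∧
      ∀ᶠ z in 𝓝 a, f z = f a + φ z ^ n := by
  have hF : AnalyticAt ℂ (fun z => f z - f a) a := hf.sub analyticAt_const
  obtain ⟨n, hn⟩ : ∃ n : ℕ, analyticOrderAt (fun z => f z - f a) a = n := by
    have : analyticOrderAt (fun z => f z - f a) a ≠ ⊤ := fun htop => hnc <| by
      filter_upwards [analyticOrderAt_eq_top.mp htop] with z hz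
      exact sub_eq_zero.mp hz
    obtain ⟨n, hn⟩ := WithTop.ne_top_iff_exists.mp this
    exact ⟨n, hn.symm⟩
  obtain ⟨g, hg, hga, hfg⟩ := hF.analyticOrderAt_eq_natCast.mp hn
  have hn0 : n ≠ 0 := by
    rintro rfl
    simpa [eq_comm, hga] using hfg.self_of_nhds
  obtain ⟨h, hh, hha, hhg⟩ := hg.exists_eventuallyEq_pow hga hn0
  refine ⟨n, hn0, fun z => (z - a) * h z, h a, hha, ?_, by simp, ?_⟩
  · simpa [← sub_eq_add_neg] using
      ((hasStrictDerivAt_id a).add_const (-a)).fun_mul hh.hasStrictDerivAt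
  · filter_upwards [hfg, hhg] with z hz hhz
    rw [mul_pow, hhz, ← smul_eq_mul, ← hz, add_sub_cancel]

theorem AnalyticOnNhd.not_eventually_eq_self {𝕜 E F : Type*} [NontriviallyNormedField 𝕜]
    [NormedAddCommGroup E] [NormedSpace 𝕜 E] [NormedAddCommGroup F] [NormedSpace 𝕜 F]
    [CompleteSpace F] {f : E → F} {U : Set E} (hf : AnalyticOnNhd 𝕜 f U) (hU : IsPreconnected U)
    (hnc : ∃ z ∈ U, ∃ w ∈ U, f z ≠ f w) {a : E} (ha : a ∈ U) : ¬ ∀ᶠ z in 𝓝 a, f z = f a := by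
  intro h
  obtain ⟨z, hz, w, hw, hzw⟩ := hnc
  have := hf.eqOn_of_preconnected_of_eventuallyEq analyticOnNhd_const hU ha h
  exact hzw ((this hz).trans (this hw).symm)

/-- `W` is a Jordan neighbourhood of `a` in `U` on which `f` is a proper map onto `ball c ε`. -/
structure IsProperJordanNhd (f : ℂ → ℂ) (U W : Set ℂ) (a c : ℂ) (ε : ℝ) : Prop where
  isOpen : IsOpen W
  mem : a ∈ W
  subset : W ⊆ U
  nonempty_homeomorph : Nonempty (W ≃ₜ ball (0 : ℂ) 1)
  image_eq : f '' W = ball c ε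
  isCompact_inter_preimage : ∀ K ⊆ ball c ε, IsCompact K → IsCompact (W ∩ f ⁻¹' K)

theorem OpenPartialHomeomorph.isProperJordanNhd_symm_image_ball {f : ℂ → ℂ} {U : Set ℂ} {c : ℂ}
    {n : ℕ} {s : ℝ} (e : OpenPartialHomeomorph ℂ ℂ) (hn : n ≠ 0) (hs : 0 < s)
    (he : ball 0 s ⊆ e.target) (hU : e.symm '' ball 0 s ⊆ U)
    (hf : EqOn f (fun z => c + e z ^ n) (e.symm '' ball 0 s)) :
    IsProperJordanNhd f U (e.symm '' ball 0 s) (e.symm 0) c (s ^ n) where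
  isOpen := e.isOpen_image_symm_of_subset_target isOpen_ball he
  mem := mem_image_of_mem _ (mem_ball_self hs)
  subset := hU
  nonempty_homeomorph := by
    obtain ⟨e₁⟩ := e.nonempty_homeomorph_symm_image he
    obtain ⟨e₂⟩ := nonempty_homeomorph_ball (0 : ℂ) hs
    exact ⟨e₁.trans (e₂.trans Homeomorph.unitBall)⟩
  image_eq := by
    rw [hf.image_eq, show (fun z => c + e z ^ n) = (fun w => c + w ^ n) ∘ e from rfl, image_comp,
      show e '' (e.symm '' ball 0 s) = ball 0 s from e.image_symm_image_of_subset_target he,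
      image_add_pow_ball c hn hs.le]
  isCompact_inter_preimage K hK hKc := by
    have hP : (fun w => c + w ^ n) ⁻¹' K ⊆ ball 0 s :=
      preimage_add_pow_ball c hn hs.le ▸ preimage_mono hK
    rw [hf.inter_preimage_eq, show (fun z => c + e z ^ n) = (fun w => c + w ^ n) ∘ e from rfl,
      preimage_comp]
    exact e.isCompact_symm_image_inter_preimage he hP
      ((isCompact_closedBall 0 s).of_isClosed_subset (hKc.isClosed.preimage (by fun_prop))
        (hP.trans ball_subset_closedBall))

theorem AnalyticAt.exists_isProperJordanNhd {f : ℂ → ℂ} {U : Set ℂ} {a : ℂ}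
    (hf : AnalyticAt ℂ f a) (hnc : ¬ ∀ᶠ z in 𝓝 a, f z = f a) (hU : U ∈ 𝓝 a) :
    ∃ ε₀ > 0, ∀ ε : ℝ, 0 < ε → ε < ε₀ → ∃ W, IsProperJordanNhd f U W a (f a) ε := by
  obtain ⟨n, hn, φ, c, hc, hφ, hφa, hfφ⟩ := hf.exists_eventuallyEq_add_pow hnc
  have hφ' := hφ.hasStrictFDerivAt_equiv hc
  set e := hφ'.toOpenPartialHomeomorph φ
  have hsrc : a ∈ e.source := hφ'.mem_toOpenPartialHomeomorph_source
  have he : ⇑e = φ := hφ'.toOpenPartialHomeomorph_coe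
  have hea : e a = 0 := by rw [he, hφa]
  have h0 : (0 : ℂ) ∈ e.target := hea ▸ e.map_source hsrc
  have hsymm : e.symm 0 = a := hea ▸ e.left_inv hsrc
  have hV : e.target ∩ e.symm ⁻¹' (U ∩ {z | f z = f a + e z ^ n}) ∈ 𝓝 0 :=
    inter_mem (e.open_target.mem_nhds h0) ((e.continuousAt_symm h0).preimage_mem_nhds
      (by rw [hsymm, he]; exact inter_mem hU hfφ))
  obtain ⟨δ, hδ, hδV⟩ := Metric.mem_nhds_iff.mp hV
  refine ⟨δ ^ n, pow_pos hδ n, fun ε hε hεδ => ?_⟩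
  set s := ε ^ (n⁻¹ : ℝ)
  have hsn : s ^ n = ε := Real.rpow_inv_natCast_pow hε.le hn
  have hsδ : s < δ := lt_of_pow_lt_pow_left₀ n hδ.le (hsn ▸ hεδ)
  have hsV := (ball_subset_ball hsδ.le).trans hδV
  have := e.isProperJordanNhd_symm_image_ball (f := f) (U := U) (c := f a) hn (by positivity)
    (fun w hw => (hsV hw).1) ?_ ?_
  · rw [hsymm, hsn] at this
    exact ⟨_, this⟩
  · rintro _ ⟨w, hw, rfl⟩
    exact (hsV hw).2.1
  · rintro _ ⟨w, hw, rfl⟩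
    exact (hsV hw).2.2

theorem proper_jordan_neighborhoods
    (U : Set ℂ) (hU : IsOpen U) (hconn : IsConnected U)
    (f : ℂ → ℂ) (hf : DifferentiableOn ℂ f U)
    (hnc : ∃ z ∈ U, ∃ w ∈ U, f z ≠ f w)
    (a b : ℂ) (ha : a ∈ U) (hb : b ∈ U) (hab : f a = f b) :
    ∃ ε₀ > 0, ∀ ε : ℝ, 0 < ε → ε < ε₀ →
      ∃ W₁ W₂ : Set ℂ, IsOpen W₁ ∧ IsOpen W₂ ∧
        a ∈ W₁ ∧ b ∈ W₂ ∧ W₁ ⊆ U ∧ W₂ ⊆ U ∧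
        Nonempty (W₁ ≃ₜ (Metric.ball (0:ℂ) 1)) ∧
        Nonempty (W₂ ≃ₜ (Metric.ball (0:ℂ) 1)) ∧
        f '' W₁ = Metric.ball (f a) ε ∧
        f '' W₂ = Metric.ball (f a) ε ∧
        (∀ K ⊆ Metric.ball (f a) ε, IsCompact K → IsCompact (W₁ ∩ f ⁻¹' K)) ∧
        (∀ K ⊆ Metric.ball (f a) ε, IsCompact K → IsCompact (W₂ ∩ f ⁻¹' K)) := by
  have hfU : AnalyticOnNhd ℂ f U := hf.analyticOnNhd hU
  have hlocal : ∀ x ∈ U, ∃ ε₀ > 0, ∀ ε : ℝ, 0 < ε → ε < ε₀ →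
      ∃ W, IsProperJordanNhd f U W x (f x) ε := fun x hx =>
    (hfU x hx).exists_isProperJordanNhd (hfU.not_eventually_eq_self hconn.isPreconnected hnc hx)
      (hU.mem_nhds hx)
  obtain ⟨ε₁, hε₁, H₁⟩ := hlocal a ha
  obtain ⟨ε₂, hε₂, H₂⟩ := hlocal b hb
  refine ⟨min ε₁ ε₂, lt_min hε₁ hε₂, fun ε hε hεm => ?_⟩
  obtain ⟨W₁, h₁⟩ := H₁ ε hε (hεm.trans_le (min_le_left _ _))
  obtain ⟨W₂, h₂⟩ := H₂ ε hε (hεm.trans_le (min_le_right _ _))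
  rw [← hab] at h₂
  exact ⟨W₁, W₂, h₁.isOpen, h₂.isOpen, h₁.mem, h₂.mem, h₁.subset, h₂.subset,
    h₁.nonempty_homeomorph, h₂.nonempty_homeomorph, h₁.image_eq, h₂.image_eq,
    h₁.isCompact_inter_preimage, h₂.isCompact_inter_preimage⟩
end

section
/- Let φ be holomorphic on a neighborhood of the closed unit disk and suppose φ(𝕋) is a Jordan curve (i.e., φ restricted to 𝕋 is injective onto its image, or more generally φ(𝕋) is homeomorphic to a circle). Then φ(𝕋) equals the topological boundary of φ(𝔻). -/
/-!
By the open mapping theorem `Ω = φ(𝔻)` is open (`φ` is not constant, as `φ(𝕋)` is not a point),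
and by compactness `∂Ω ⊆ φ(𝕋) ⊆ closure Ω`; it remains to see that the Jordan curve `C = φ(𝕋)`
misses `Ω`. If `p ∈ C ∩ Ω`, then `∂Ω` is a closed subset of `C` avoiding `p`, so it lies on an arc
`J ⊆ C \ {p}`. An arc does not separate a point from infinity (Borsuk): for `a ∉ J`, `z - a` has a
continuous logarithm on `J`; extending it (Tietze) over a bounded component of `ℂ \ J` and gluing
with `z - a` outside gives a nonvanishing function on the simply connected plane, whose logarithm
would be a continuous logarithm of `z - a` on a large circle around `a`. Hence the component of
`p` in `ℂ \ J` is unbounded, yet it cannot leave the bounded set `Ω` without meeting `∂Ω ⊆ J`.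
-/

open Complex Metric Set
open scoped Real

theorem Complex.eq_of_exp_comp_eq {A : Type*} [TopologicalSpace A] [PreconnectedSpace A]
    {g₁ g₂ : A → ℂ} (h₁ : Continuous g₁) (h₂ : Continuous g₂)
    (h : ∀ x, exp (g₁ x) = exp (g₂ x)) (x₀ : A) (h₀ : g₁ x₀ = g₂ x₀) : g₁ = g₂ :=
  isCoveringMap_exp.eq_of_comp_eq h₁ h₂ (funext fun x ↦ Subtype.ext (h x)) x₀ h₀

theorem not_exists_log_sub_on_sphere (c : ℂ) {R : ℝ} (hR : 0 < R) :
    ¬ ∃ L : ℂ → ℂ, ContinuousOn L (sphere c R) ∧ ∀ z ∈ sphere c R, exp (L z) = z - c := by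
  rintro ⟨L, hLc, hLexp⟩
  have hmem : ∀ t : ℝ, c + R * exp (t * I) ∈ sphere c R := fun t ↦ by
    simp [abs_of_pos hR]
  have hexp₀ : exp (L (c + R)) = R := by simpa using hLexp _ (hmem 0)
  have hlift : (fun t : ℝ ↦ L (c + R * exp (t * I))) = fun t : ℝ ↦ L (c + R) + t * I := by
    refine Complex.eq_of_exp_comp_eq (hLc.comp_continuous (by fun_prop) hmem) (by fun_prop)
      (fun t ↦ ?_) 0 (by simp)
    rw [hLexp _ (hmem t), exp_add, hexp₀]
    ring
  have h2pi := congrFun hlift (2 * Real.pi)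
  simp only [ofReal_mul, ofReal_ofNat, exp_two_pi_mul_I, mul_one, left_eq_add] at h2pi
  simp [Real.pi_ne_zero] at h2pi

theorem frontier_connectedComponentIn_subset {α : Type*} [TopologicalSpace α]
    [LocallyConnectedSpace α] {F : Set α} (hF : IsOpen F) (x : α) :
    frontier (connectedComponentIn F x) ⊆ Fᶜ := by
  intro y hy hyF
  have hB := hF.connectedComponentIn (x := x)
  rw [hB.frontier_eq] at hy
  obtain ⟨z, hzy, hzx⟩ := mem_closure_iff.mp hy.1 _ hF.connectedComponentIn
    (mem_connectedComponentIn hyF)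
  rw [connectedComponentIn_eq hzx, ← connectedComponentIn_eq hzy] at hy
  exact hy.2 (mem_connectedComponentIn hyF)

theorem not_isBounded_connectedComponentIn_compl {K : Set ℂ} (hK : IsClosed K) {a : ℂ}
    (ha : a ∉ K) (g : C(K, ℂ)) (hg : ∀ z : K, exp (g z) = z - a) :
    ¬ Bornology.IsBounded (connectedComponentIn Kᶜ a) := by
  classical
  intro hB
  set B := connectedComponentIn Kᶜ a
  have haB : a ∈ B := mem_connectedComponentIn ha
  obtain ⟨G, hG⟩ := ContinuousMap.exists_restrict_eq hK g
  have hGK : ∀ z ∈ K, exp (G z) = z - a := fun z hz ↦ by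
    rw [← hg ⟨z, hz⟩, ← hG]
    rfl
  set Φ := B.piecewise (fun z ↦ exp (G z)) (· - a)
  have hΦ : Continuous Φ := Continuous.piecewise
    (fun z hz ↦ hGK z (by simpa using frontier_connectedComponentIn_subset hK.isOpen_compl a hz))
    (by fun_prop) (by fun_prop)
  have hΦ0 : ∀ z, Φ z ∈ ({0}ᶜ : Set ℂ) := by
    intro z
    by_cases hz : z ∈ B
    · simp [Φ, hz, exp_ne_zero]
    · simp only [Φ, piecewise_eq_of_notMem _ _ _ hz, mem_compl_iff, mem_singleton_iff, sub_eq_zero]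
      rintro rfl
      exact hz haB
  obtain ⟨L, -, hL⟩ := (isCoveringMapOn_exp.existsUnique_continuousMap_lifts ⟨Φ, hΦ⟩
    (a₀ := 0) (exp_log (hΦ0 0)) hΦ0).exists
  obtain ⟨R, hR⟩ := hB.subset_ball a
  refine not_exists_log_sub_on_sphere a (pos_of_mem_ball (hR haB))
    ⟨L, L.continuous.continuousOn, fun z hz ↦ ?_⟩
  have hzB : z ∉ B := fun h ↦ (mem_sphere.mp hz).not_lt (mem_ball.mp (hR h))
  rw [← piecewise_eq_of_notMem B (fun z ↦ exp (G z)) (· - a) hzB]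
  exact congrFun hL z

theorem exists_log_sub_on_range {γ : unitInterval → ℂ} (hγ : Continuous γ)
    (hinj : Function.Injective γ) {a : ℂ} (ha : a ∉ range γ) :
    ∃ g : C(range γ, ℂ), ∀ z : range γ, exp (g z) = z - a := by
  let f : C(unitInterval, {z : ℂ // z ≠ 0}) :=
    ⟨fun t ↦ ⟨γ t - a, sub_ne_zero.mpr fun h ↦ ha ⟨t, h⟩⟩, by fun_prop⟩
  obtain ⟨L, hL, -⟩ := isCoveringMap_exp.exists_path_lifts f (log (f 0))
    (Subtype.ext (exp_log (f 0).2).symm)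
  let h := (hγ.isClosedEmbedding hinj).isEmbedding.toHomeomorph
  refine ⟨L.comp (h.symm : C(range γ, unitInterval)), fun z ↦ ?_⟩
  have hz : γ (h.symm z) = z := congrArg Subtype.val (h.apply_symm_apply z)
  rw [ContinuousMap.comp_apply, ← hz]
  exact congrArg Subtype.val (congrFun hL (h.symm z))

theorem subset_range_of_frontier_subset_range {γ : unitInterval → ℂ} (hγ : Continuous γ)
    (hinj : Function.Injective γ) {U : Set ℂ} (hU : IsOpen U) (hUb : Bornology.IsBounded U)
    (hfr : frontier U ⊆ range γ) : U ⊆ range γ := by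
  intro a haU
  by_contra ha
  obtain ⟨g, hg⟩ := exists_log_sub_on_range hγ hinj ha
  refine not_isBounded_connectedComponentIn_compl (isCompact_range hγ).isClosed ha g hg
    (hUb.subset ?_)
  refine isPreconnected_connectedComponentIn.subset_of_closure_inter_subset hU
    ⟨a, mem_connectedComponentIn ha, haU⟩ ?_
  rintro x ⟨hxU, hxT⟩
  by_contra hx
  exact connectedComponentIn_subset _ _ hxT (hfr (hU.frontier_eq ▸ ⟨hxU, hx⟩))

theorem exp_arg_mul_I_of_norm_eq_one {u : ℂ} (hu : ‖u‖ = 1) : exp (arg u * I) = u := by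
  simpa [hu] using norm_mul_exp_arg_mul_I u

theorem mem_slitPlane_of_norm_eq_one {u : ℂ} (hu : ‖u‖ = 1) (h : u ≠ -1) : u ∈ slitPlane := by
  refine mem_slitPlane_iff_arg.mpr ⟨fun harg ↦ h ?_, norm_ne_zero_iff.mp (hu ▸ one_ne_zero)⟩
  rw [← exp_arg_mul_I_of_norm_eq_one hu, harg]
  simp

theorem IsCompact.exists_pos_lt_forall_abs_le {α : Type*} [TopologicalSpace α] {s : Set α}
    (hs : IsCompact s) {f : α → ℝ} (hf : ContinuousOn f s) {b : ℝ} (hb : 0 < b)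
    (hlt : ∀ x ∈ s, |f x| < b) : ∃ M, 0 < M ∧ M < b ∧ ∀ x ∈ s, |f x| ≤ M := by
  rcases s.eq_empty_or_nonempty with rfl | hne
  · exact ⟨b / 2, by positivity, by linarith, by simp⟩
  obtain ⟨x₀, hx₀, hmax⟩ := hs.exists_isMaxOn hne (continuous_abs.comp_continuousOn hf)
  have := hlt x₀ hx₀
  exact ⟨(|f x₀| + b) / 2, by positivity, by linarith,
    fun x hx ↦ (hmax hx).trans (by dsimp; linarith)⟩

-- `arg (-w / q)` is the angle of `w` measured from `-q`, so `q` sits at angle `π`.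
theorem exists_arc_sphere_of_abs_arg_le (q : sphere (0:ℂ) 1) {M : ℝ} (hM0 : 0 < M)
    (hMπ : M < π) :
    ∃ γ : unitInterval → sphere (0:ℂ) 1, Continuous γ ∧ Function.Injective γ ∧
      {w : sphere (0:ℂ) 1 | |arg (-(w : ℂ) / q)| ≤ M} ⊆ range γ ∧ q ∉ range γ := by
  have hq0 : (q : ℂ) ≠ 0 := ne_zero_of_mem_unit_sphere q
  set θ : sphere (0:ℂ) 1 → ℝ := fun w ↦ arg (-(w : ℂ) / q)
  have hmem : ∀ t : unitInterval, -(q : ℂ) * exp ((M * (2 * t - 1) : ℝ) * I) ∈ sphere (0:ℂ) 1 :=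
    fun t ↦ by simp [-ofReal_mul, norm_exp_ofReal_mul_I]
  let γ : unitInterval → sphere (0:ℂ) 1 := fun t ↦ ⟨_, hmem t⟩
  have hθγ : ∀ t, θ (γ t) = M * (2 * t - 1) := by
    intro t
    have h : -(γ t : ℂ) / q = exp ((M * (2 * t - 1) : ℝ) * I) := by
      simp only [γ]
      field_simp
    have h₀ := t.2.1
    have h₁ := t.2.2
    simp only [θ, h, arg_exp_mul_I, toIocMod_eq_self, mem_Ioc]
    constructor <;> nlinarith
  refine ⟨γ, (by fun_prop : Continuous _).subtype_mk _, fun s t hst ↦ ?_, fun w hw ↦ ?_, ?_⟩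
  · have h := congrArg θ hst
    rw [hθγ, hθγ] at h
    exact Subtype.ext (by linarith [mul_left_cancel₀ hM0.ne' h])
  · have hw' := abs_le.mp (show |θ w| ≤ M from hw)
    refine ⟨⟨(θ w / M + 1) / 2, ⟨?_, ?_⟩⟩, Subtype.ext ?_⟩
    · rw [le_div_iff₀ two_pos, zero_mul, ← neg_le_iff_add_nonneg, le_div_iff₀ hM0]; linarith
    · rw [div_le_one two_pos, ← le_sub_iff_add_le, div_le_iff₀ hM0]; linarith
    · have h : ((M * (2 * ((θ w / M + 1) / 2) - 1) : ℝ) : ℂ) = θ w := by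
        congr 1; field_simp; ring
      simp only [γ, h, θ, exp_arg_mul_I_of_norm_eq_one (by simp : ‖-(w : ℂ) / q‖ = 1)]
      field_simp
  · rintro ⟨t, ht⟩
    have h := hθγ t
    rw [ht] at h
    simp only [θ, neg_div, div_self hq0, arg_neg_one] at h
    nlinarith [t.2.2]

theorem exists_arc_sphere_of_notMem {q : sphere (0:ℂ) 1} {F : Set (sphere (0:ℂ) 1)}
    (hF : IsClosed F) (hq : q ∉ F) :
    ∃ γ : unitInterval → sphere (0:ℂ) 1,
      Continuous γ ∧ Function.Injective γ ∧ F ⊆ range γ ∧ q ∉ range γ := by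
  have hslit : ∀ w ∈ F, -(w : ℂ) / q ∈ slitPlane := fun w hw ↦
    mem_slitPlane_of_norm_eq_one (by simp) fun h ↦ ne_of_mem_of_not_mem hw hq (Subtype.ext (by
      field_simp [ne_zero_of_mem_unit_sphere q] at h
      linear_combination -h))
  have hθc : ContinuousOn (fun w : sphere (0:ℂ) 1 ↦ arg (-(w : ℂ) / q)) F := fun w hw ↦
    ((continuousAt_arg (hslit w hw)).comp
      (f := fun w : sphere (0:ℂ) 1 ↦ -(w : ℂ) / q) (by fun_prop)).continuousWithinAt
  obtain ⟨M, hM0, hMπ, hM⟩ := hF.isCompact.exists_pos_lt_forall_abs_le hθc Real.pi_pos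
    fun w hw ↦ abs_lt.mpr
      ⟨neg_pi_lt_arg _, (arg_le_pi _).lt_of_ne (slitPlane_arg_ne_pi (hslit w hw))⟩
  obtain ⟨γ, hγc, hγi, hMγ, hqγ⟩ := exists_arc_sphere_of_abs_arg_le q hM0 hMπ
  exact ⟨γ, hγc, hγi, fun w hw ↦ hMγ (hM w hw), hqγ⟩

theorem exists_arc_of_homeomorph_sphere {C F : Set ℂ} (e : sphere (0:ℂ) 1 ≃ₜ C)
    (hF : IsClosed F) (hFC : F ⊆ C) {p : ℂ} (hp : p ∈ C) (hpF : p ∉ F) :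
    ∃ γ : unitInterval → ℂ,
      Continuous γ ∧ Function.Injective γ ∧ F ⊆ range γ ∧ p ∉ range γ := by
  obtain ⟨γ, hγc, hγi, hFγ, hqγ⟩ := exists_arc_sphere_of_notMem (q := e.symm ⟨p, hp⟩)
    (hF.preimage (continuous_subtype_val.comp e.continuous)) (by simpa using hpF)
  refine ⟨fun t ↦ e (γ t), by fun_prop, Subtype.val_injective.comp (e.injective.comp hγi),
    fun x hx ↦ ?_, ?_⟩
  · obtain ⟨t, ht⟩ := hFγ (show e.symm ⟨x, hFC hx⟩ ∈ (fun w ↦ (e w : ℂ)) ⁻¹' F by simpa using hx)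
    exact ⟨t, by simp [ht]⟩
  · rintro ⟨t, ht⟩
    exact hqγ ⟨t, (e.symm_apply_eq.mpr (Subtype.ext ht.symm)).symm⟩

theorem disjoint_of_frontier_subset_of_homeomorph_sphere {C U : Set ℂ}
    (e : sphere (0:ℂ) 1 ≃ₜ C) (hU : IsOpen U) (hUb : Bornology.IsBounded U)
    (hfr : frontier U ⊆ C) : Disjoint C U := by
  refine disjoint_left.mpr fun p hpC hpU ↦ ?_
  obtain ⟨γ, hγc, hγi, hUγ, hpγ⟩ := exists_arc_of_homeomorph_sphere e isClosed_frontier hfr hpC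
    (fun h ↦ (hU.frontier_eq ▸ h).2 hpU)
  exact hpγ (subset_range_of_frontier_subset_range hγc hγi hU hUb hUγ hpU)

theorem frontier_image_ball_subset {E X : Type*} [PseudoMetricSpace E] [ProperSpace E]
    [TopologicalSpace X] [T2Space X] {φ : E → X} {c : E} {r : ℝ}
    (hφ : ContinuousOn φ (closedBall c r)) (hΩ : IsOpen (φ '' ball c r)) :
    frontier (φ '' ball c r) ⊆ φ '' sphere c r := by
  rw [hΩ.frontier_eq]
  rintro x ⟨hx, hxΩ⟩
  obtain ⟨z, hz, rfl⟩ := closure_minimal (image_mono ball_subset_closedBall)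
    ((isCompact_closedBall c r).image_of_continuousOn hφ).isClosed hx
  rw [← ball_union_sphere] at hz
  exact mem_image_of_mem φ (hz.resolve_left fun h ↦ hxΩ (mem_image_of_mem φ h))

theorem image_sphere_subset_closure_image_ball {E X : Type*} [NormedAddCommGroup E]
    [NormedSpace ℝ E] [TopologicalSpace X] {φ : E → X} {c : E} {r : ℝ}
    (hφ : ContinuousOn φ (closedBall c r)) (hr : r ≠ 0) :
    φ '' sphere c r ⊆ closure (φ '' ball c r) := by
  rw [← closure_ball c hr] at hφ
  exact (image_mono (closure_ball c hr ▸ sphere_subset_closedBall)).trans hφ.image_closure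

theorem isOpen_image_ball_of_nontrivial {φ : ℂ → ℂ} {c : ℂ} {r : ℝ}
    (hφ : DifferentiableOn ℂ φ (closedBall c r)) (hC : (φ '' sphere c r).Nontrivial) :
    IsOpen (φ '' ball c r) := by
  rcases eq_or_ne r 0 with rfl | hr
  · simp
  have han : AnalyticOnNhd ℂ φ (ball c r) :=
    (hφ.mono ball_subset_closedBall).analyticOnNhd isOpen_ball
  rcases han.is_constant_or_isOpen (convex_ball c r).isPreconnected with ⟨w, hw⟩ | hopen
  · have hconst : EqOn φ (fun _ ↦ w) (closedBall c r) := EqOn.of_subset_closure hw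
      hφ.continuousOn continuousOn_const ball_subset_closedBall (closure_ball c hr).ge
    refine absurd ((subsingleton_singleton (a := w)).anti ?_) hC.not_subsingleton
    rintro _ ⟨z, hz, rfl⟩
    exact hconst (sphere_subset_closedBall hz)
  · exact hopen _ subset_rfl isOpen_ball

theorem jordan_image_is_boundary_general
    (U : Set ℂ) (hUD : Metric.closedBall (0:ℂ) 1 ⊆ U)
    (φ : ℂ → ℂ) (hφ : DifferentiableOn ℂ φ U)
    (hJordan : Nonempty ((Metric.sphere (0:ℂ) 1) ≃ₜ (φ '' (Metric.sphere (0:ℂ) 1)))) :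
    φ '' (Metric.sphere (0:ℂ) 1) = frontier (φ '' (Metric.ball (0:ℂ) 1)) := by
  obtain ⟨e⟩ := hJordan
  have hφ' : DifferentiableOn ℂ φ (closedBall 0 1) := hφ.mono hUD
  have hsphere : (sphere (0:ℂ) 1).Nontrivial := ⟨1, by simp, -1, by simp, by norm_num⟩
  have : Nontrivial (sphere (0:ℂ) 1) := hsphere.coe_sort
  have hΩ : IsOpen (φ '' ball 0 1) :=
    isOpen_image_ball_of_nontrivial hφ' (nontrivial_coe_sort.mp e.injective.nontrivial)
  have hΩb : Bornology.IsBounded (φ '' ball 0 1) :=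
    ((isCompact_closedBall 0 1).image_of_continuousOn hφ'.continuousOn).isBounded.subset
      (image_mono ball_subset_closedBall)
  have hfr := frontier_image_ball_subset hφ'.continuousOn hΩ
  have hdisj := disjoint_of_frontier_subset_of_homeomorph_sphere e hΩ hΩb hfr
  refine hfr.antisymm' fun x hx ↦ hΩ.frontier_eq ▸ ⟨?_, hdisj.notMem_of_mem_left hx⟩
  exact image_sphere_subset_closure_image_ball hφ'.continuousOn one_ne_zero hx

theorem jordan_image_is_boundary
    (U : Set ℂ) (hU : IsOpen U) (hUD : Metric.closedBall (0:ℂ) 1 ⊆ U)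
    (φ : ℂ → ℂ) (hφ : DifferentiableOn ℂ φ U)
    (hnc : ∃ z ∈ Metric.closedBall (0:ℂ) 1, ∃ w ∈ Metric.closedBall (0:ℂ) 1, φ z ≠ φ w)
    (hJordan : Nonempty ((Metric.sphere (0:ℂ) 1) ≃ₜ (φ '' (Metric.sphere (0:ℂ) 1)))) :
    φ '' (Metric.sphere (0:ℂ) 1) = frontier (φ '' (Metric.ball (0:ℂ) 1)) :=
  jordan_image_is_boundary_general U hUD φ hφ hJordan
end

section
/- Let φ be holomorphic on a neighborhood of the closed unit disk. Then the set of self-intersection points of the curve φ(𝕋), i.e., {λ ∈ ℂ : there exist distinct w₁, w₂ ∈ 𝕋 with φ(w₁) = φ(w₂) = λ}, is either finite or has the cardinality of the continuum. -/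
/-!
If there are infinitely many self-intersection values, compactness of `𝕋 × 𝕋` gives angles
`s n, t n → 0` and limit points `a, b` with `φ (a e^{i s n}) = φ (b e^{i t n})` pairwise distinct.
Near the common value `c = φ a = φ b`, `q t = φ (b e^{it})` satisfies `q t - c = η(t)^k` for a
conformal `η`, and after the substitution `s = ±σ^k` also `g s - c`, with `g s = φ (a e^{is})`,
becomes a `k`-th power `β(σ)^k`. Fixing one root of unity and inverting `η` yields an analytic
`t = ψ(σ)` passing through infinitely many of the pairs; `ψ` is real on `ℝ` by the reflection
principle, and the identity theorem keeps the two circle points apart. Hence `σ ↦ g(±σ^k)`,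
`σ ∈ (0, r)`, is a nonconstant continuous arc of self-intersection values, and a nontrivial
connected subset of `ℂ` has at least continuum many points.
-/

open Complex Cardinal Filter Set Topology ComplexConjugate

theorem IsPreconnected.continuum_le_mk {X : Type*} [TopologicalSpace X] [T35Space X] {K : Set X}
    (hK : IsPreconnected K) (hnt : K.Nontrivial) : 𝔠 ≤ #K := by
  by_contra! h
  have := CompletelyRegularSpace.totallySeparatedSpace_of_cardinalMk_lt_continuum h
  have := isPreconnected_iff_preconnectedSpace.mp hK
  exact hnt.not_subsingleton
    ((subsingleton_coe K).mp (subsingleton_univ_iff.mp isPreconnected_univ.subsingleton))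

theorem Set.Nontrivial.image_Ioo_of_tendsto {X : Type*} [TopologicalSpace X] [T1Space X]
    {f : ℝ → X} {a r x : ℝ} {c : X} (hf : Tendsto f (𝓝[>] a) (𝓝 c)) (hx : x ∈ Ioo a r)
    (hfx : f x ≠ c) : (f '' Ioo a r).Nontrivial := by
  obtain ⟨y, hy, hyr⟩ := ((hf.eventually_ne hfx.symm).and (Ioo_mem_nhdsGT (hx.1.trans hx.2))).exists
  exact ⟨f y, mem_image_of_mem f hyr, f x, mem_image_of_mem f hx, hy⟩

namespace AnalyticAt

theorem exists_pow_eq {f : ℂ → ℂ} {x : ℂ} (hf : AnalyticAt ℂ f x) (hfx : f x ≠ 0) {k : ℕ}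
    (hk : k ≠ 0) : ∃ r : ℂ → ℂ, AnalyticAt ℂ r x ∧ r x ≠ 0 ∧ ∀ z, r z ^ k = f z := by
  obtain ⟨c, hc⟩ := IsAlgClosed.exists_pow_nat_eq (f x) (Nat.pos_of_ne_zero hk)
  have hc0 : c ≠ 0 := by rintro rfl; exact hfx (by simp [← hc, hk])
  refine ⟨fun z => c * (f z / f x) ^ (k⁻¹ : ℂ), analyticAt_const.mul
    ((hf.div analyticAt_const hfx).cpow analyticAt_const (by simp [hfx])), by simp [hfx, hc0],
    fun z => ?_⟩
  rw [mul_pow, cpow_nat_inv_pow _ hk, hc, mul_div_cancel₀ _ hfx]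

theorem exists_eventually_eq_pow_mul {f : ℂ → ℂ} {x : ℂ} (hf : AnalyticAt ℂ f x) (hfx : f x = 0)
    (hne : ¬ ∀ᶠ z in 𝓝 x, f z = 0) :
    ∃ m ≠ 0, ∃ u : ℂ → ℂ, AnalyticAt ℂ u x ∧ u x ≠ 0 ∧ ∀ᶠ z in 𝓝 x, f z = (z - x) ^ m * u z := by
  obtain ⟨m, u, hu, hux, hfu⟩ := hf.exists_eventuallyEq_pow_smul_nonzero_iff.mpr hne
  refine ⟨m, ?_, u, hu, hux, hfu⟩
  rintro rfl
  exact hux (by simpa [hfx] using hfu.self_of_nhds.symm)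

theorem exists_eventually_eq_pow {f : ℂ → ℂ} {x : ℂ} (hf : AnalyticAt ℂ f x) (hfx : f x = 0)
    (hne : ¬ ∀ᶠ z in 𝓝 x, f z = 0) :
    ∃ k ≠ 0, ∃ η : ℂ → ℂ, AnalyticAt ℂ η x ∧ η x = 0 ∧ deriv η x ≠ 0 ∧
      ∀ᶠ z in 𝓝 x, f z = η z ^ k := by
  obtain ⟨k, hk, u, hu, hux, hfu⟩ := hf.exists_eventually_eq_pow_mul hfx hne
  obtain ⟨r, hr, hrx, hru⟩ := hu.exists_pow_eq hux hk
  have hη : HasDerivAt (fun z => (z - x) * r z) (r x) x := by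
    simpa using ((hasDerivAt_id x).sub_const x).fun_mul hr.differentiableAt.hasDerivAt
  refine ⟨k, hk, fun z => (z - x) * r z, (analyticAt_id.sub analyticAt_const).mul hr, by simp,
    by rwa [hη.deriv], hfu.mono fun z hz => by rw [hz, mul_pow, hru]⟩

theorem exists_eventually_comp_mul_pow_eq_pow {f : ℂ → ℂ} (hf : AnalyticAt ℂ f 0) (hf0 : f 0 = 0)
    (hne : ¬ ∀ᶠ z in 𝓝 0, f z = 0) {ε : ℂ} (hε : ε ≠ 0) {k : ℕ} (hk : k ≠ 0) :
    ∃ β : ℂ → ℂ, AnalyticAt ℂ β 0 ∧ β 0 = 0 ∧ ∀ᶠ z in 𝓝 0, f (ε * z ^ k) = β z ^ k := by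
  obtain ⟨m, hm, u, hu, hu0, hfu⟩ := hf.exists_eventually_eq_pow_mul hf0 hne
  have hS : AnalyticAt ℂ (fun z : ℂ => ε * z ^ k) 0 := analyticAt_const.mul (analyticAt_id.pow k)
  have hS0 : ε * (0 : ℂ) ^ k = 0 := by simp [hk]
  have hV : AnalyticAt ℂ (fun z => ε ^ m * u (ε * z ^ k)) 0 :=
    analyticAt_const.mul (hu.comp_of_eq hS hS0)
  obtain ⟨c, hc, -, hcu⟩ := hV.exists_pow_eq (by simp [hS0, hε, hu0]) hk
  refine ⟨fun z => z ^ m * c z, (analyticAt_id.pow m).mul hc, by simp [hm], ?_⟩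
  have hS' : Tendsto (fun z : ℂ => ε * z ^ k) (𝓝 0) (𝓝 0) := by
    simpa [hk] using hS.continuousAt.tendsto
  filter_upwards [hS'.eventually hfu] with z hz
  simp only [hz, sub_zero, mul_pow, hcu]
  ring

theorem conj_comp_conj {f : ℂ → ℂ} {x : ℂ} (hf : AnalyticAt ℂ f x) :
    AnalyticAt ℂ (conj ∘ f ∘ conj) (conj x) := by
  have hconj : Tendsto conj (𝓝 (conj x)) (𝓝 x) := by
    simpa using continuous_conj.tendsto (conj x)
  rw [analyticAt_iff_eventually_differentiableAt]
  filter_upwards [hconj.eventually hf.eventually_analyticAt] with z hz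
  simpa using hz.differentiableAt.hasDerivAt.conj_conj.differentiableAt

theorem eventually_im_eq_zero {f : ℂ → ℂ} {x : ℝ} (hf : AnalyticAt ℂ f x)
    (h : ∃ᶠ y : ℝ in 𝓝[≠] x, (f y).im = 0) : ∀ᶠ y : ℝ in 𝓝 x, (f y).im = 0 := by
  have hf' : AnalyticAt ℂ (conj ∘ f ∘ conj) x := by simpa using hf.conj_comp_conj
  have hofReal : Tendsto ((↑) : ℝ → ℂ) (𝓝[≠] x) (𝓝[≠] x) :=
    continuous_ofReal.continuousWithinAt.tendsto_nhdsWithin fun y hy => by simpa using hy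
  have hfreq : ∃ᶠ z in 𝓝[≠] (x : ℂ), f z = (conj ∘ f ∘ conj) z :=
    hofReal.frequently (h.mono fun y hy => by simp [conj_eq_iff_im.mpr hy])
  filter_upwards [continuous_ofReal.continuousAt.eventually
    ((hf.frequently_eq_iff_eventually_eq hf').mp hfreq)] with y hy
  exact conj_eq_iff_im.mp (by simpa using hy.symm)

end AnalyticAt

theorem exists_pow_eq_one_mul_of_pow_eq_pow {K : Type*} [Field K] {x y : K} {k : ℕ} (hk : k ≠ 0)
    (h : x ^ k = y ^ k) : ∃ ζ : K, ζ ^ k = 1 ∧ x = ζ * y := by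
  rcases eq_or_ne y 0 with rfl | hy
  · exact ⟨1, one_pow k, by simpa [hk] using h⟩
  · exact ⟨x / y, by rw [div_pow, h, div_self (pow_ne_zero k hy)], (div_mul_cancel₀ x hy).symm⟩

theorem exists_analyticAt_frequently_eq_of_pow_eq {η β : ℂ → ℂ} {k : ℕ} (hk : k ≠ 0)
    (hη : AnalyticAt ℂ η 0) (hη0 : η 0 = 0) (hη' : deriv η 0 ≠ 0)
    (hβ : AnalyticAt ℂ β 0) (hβ0 : β 0 = 0) {ι : Type*} {l : Filter ι} {p : ι → Prop}
    {σ t : ι → ℂ} (ht : Tendsto t l (𝓝 0)) (h : ∃ᶠ n in l, p n ∧ η (t n) ^ k = β (σ n) ^ k) :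
    ∃ ψ : ℂ → ℂ, AnalyticAt ℂ ψ 0 ∧ ψ 0 = 0 ∧ (∀ᶠ z in 𝓝 0, η (ψ z) ^ k = β z ^ k) ∧
      ∃ᶠ n in l, p n ∧ ψ (σ n) = t n := by
  obtain ⟨ζ, hζ, hfreq⟩ : ∃ ζ ∈ Polynomial.nthRootsFinset k (1 : ℂ),
      ∃ᶠ n in l, p n ∧ η (t n) = ζ * β (σ n) := by
    refine (Finset.frequently_exists _).mp (h.mono fun n ⟨hp, hn⟩ => ?_)
    obtain ⟨ζ, hζ, hn⟩ := exists_pow_eq_one_mul_of_pow_eq_pow hk hn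
    exact ⟨ζ, (Polynomial.mem_nthRootsFinset (Nat.pos_of_ne_zero hk) 1).mpr hζ, hp, hn⟩
  rw [Polynomial.mem_nthRootsFinset (Nat.pos_of_ne_zero hk)] at hζ
  set N := hη.hasStrictDerivAt.localInverse _ _ _ hη'
  have hN : AnalyticAt ℂ N 0 := hη0 ▸ hη.analyticAt_localInverse hη'
  have hN0 : N 0 = 0 := by
    have h := (hη.hasStrictDerivAt.eventually_left_inverse hη').self_of_nhds
    rwa [hη0] at h
  have hηN : ∀ᶠ y in 𝓝 0, η (N y) = y := hη0 ▸ hη.hasStrictDerivAt.eventually_right_inverse hη'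
  have hζβ : AnalyticAt ℂ (fun z => ζ * β z) 0 := analyticAt_const.mul hβ
  have hζβ0 : ζ * β 0 = 0 := by rw [hβ0, mul_zero]
  refine ⟨fun z => N (ζ * β z), hN.comp_of_eq hζβ hζβ0, by simp [hζβ0, hN0], ?_, ?_⟩
  · filter_upwards [(hζβ0 ▸ hζβ.continuousAt.tendsto).eventually hηN] with z hz
    rw [hz, mul_pow, hζ, one_mul]
  · refine (hfreq.and_eventually
      (ht.eventually (hη.hasStrictDerivAt.eventually_left_inverse hη'))).mono ?_
    rintro n ⟨⟨hp, htn⟩, hn⟩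
    exact ⟨hp, by simp only [← htn]; exact hn⟩

theorem exists_frequently_eq_mul_pow {ι : Type*} {l : Filter ι} {s : ι → ℝ} {p : ι → Prop}
    (hs : Tendsto s l (𝓝 0)) (hp : ∃ᶠ n in l, p n) {k : ℕ} (hk : k ≠ 0) :
    ∃ ε : ℝ, ε ≠ 0 ∧ ∃ σ : ι → ℝ, Tendsto σ l (𝓝 0) ∧
      ∃ᶠ n in l, p n ∧ 0 ≤ σ n ∧ s n = ε * σ n ^ k := by
  have hσ : Tendsto (fun n => |s n| ^ (k⁻¹ : ℝ)) l (𝓝 0) := by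
    simpa [Real.zero_rpow (inv_ne_zero (Nat.cast_ne_zero.mpr hk))] using
      hs.abs.rpow_const (Or.inr (inv_nonneg.mpr (Nat.cast_nonneg k)))
  have hpow : ∀ n, (|s n| ^ (k⁻¹ : ℝ)) ^ k = |s n| := fun n =>
    Real.rpow_inv_natCast_pow (abs_nonneg _) hk
  obtain ⟨ε, hε, hfreq⟩ : ∃ ε ∈ ({1, -1} : Finset ℝ), ∃ᶠ n in l, p n ∧ s n = ε * |s n| := by
    refine (Finset.frequently_exists _).mp (hp.mono fun n hn => ?_)
    rcases abs_choice (s n) with h | h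
    · exact ⟨1, by simp, hn, by rw [h, one_mul]⟩
    · exact ⟨-1, by simp, hn, by rw [h, neg_one_mul, neg_neg]⟩
  refine ⟨ε, by rintro rfl; simp at hε, _, hσ, hfreq.mono fun n ⟨hn, h⟩ =>
    ⟨hn, Real.rpow_nonneg (abs_nonneg _) _, by rw [hpow]; exact h⟩⟩

/-- `g` and `q` are the two branches of the curve through a common value, meeting at the parameter
pairs `(s n, t n)`; they are matched along one analytic arc `σ ↦ (S σ, T σ)`, real for real `σ`,
that passes through infinitely many of these pairs. -/
theorem exists_analyticAt_reparametrization {ι : Type*} {l : Filter ι} [l.NeBot] {g q : ℂ → ℂ}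
    (hg : AnalyticAt ℂ g 0) (hq : AnalyticAt ℂ q 0) {s t : ι → ℝ} (hs : Tendsto s l (𝓝 0))
    (ht : Tendsto t l (𝓝 0)) (hgq : ∀ n, g (s n) = q (t n)) (hne : ∀ᶠ n in l, g (s n) ≠ g 0) :
    ∃ S T : ℂ → ℂ, AnalyticAt ℂ S 0 ∧ S 0 = 0 ∧ AnalyticAt ℂ T 0 ∧
      (∀ᶠ x : ℝ in 𝓝 0, (S x).im = 0 ∧ (T x).im = 0) ∧ (∀ᶠ z in 𝓝 0, g (S z) = q (T z)) ∧
      ∃ σ : ι → ℝ, Tendsto σ l (𝓝 0) ∧ ∃ᶠ n in l, 0 < σ n ∧ S (σ n) = s n ∧ T (σ n) = t n := by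
  have hofReal : Tendsto ((↑) : ℝ → ℂ) (𝓝 0) (𝓝 0) := continuous_ofReal.tendsto' 0 0 ofReal_zero
  have hgq0 : g 0 = q 0 := tendsto_nhds_unique (hg.continuousAt.tendsto.comp (hofReal.comp hs))
    (by simpa only [Function.comp_def, hgq] using hq.continuousAt.tendsto.comp (hofReal.comp ht))
  have hg_ne : ¬ ∀ᶠ z in 𝓝 0, g z - g 0 = 0 := by
    simpa [sub_eq_zero] using (hofReal.comp hs).frequently hne.frequently
  have hq_ne : ¬ ∀ᶠ z in 𝓝 0, q z - q 0 = 0 := by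
    simpa [sub_eq_zero] using
      (hofReal.comp ht).frequently (hne.mono fun n hn => by rwa [hgq, hgq0] at hn).frequently
  obtain ⟨k, hk, η, hη, hη0, hη', hqη⟩ :=
    (hq.fun_sub analyticAt_const).exists_eventually_eq_pow (sub_self _) hq_ne
  obtain ⟨ε, hε, σ, hσ, hfreq⟩ := exists_frequently_eq_mul_pow hs hne.frequently hk
  obtain ⟨β, hβ, hβ0, hgβ⟩ := (hg.fun_sub analyticAt_const).exists_eventually_comp_mul_pow_eq_pow
    (sub_self _) hg_ne (ofReal_ne_zero.mpr hε) hk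
  have hpow : ∃ᶠ n in l, (0 < σ n ∧ s n = ε * σ n ^ k) ∧ η (t n) ^ k = β (σ n) ^ k := by
    refine (hfreq.and_eventually (((hofReal.comp ht).eventually hqη).and
      ((hofReal.comp hσ).eventually hgβ))).mono ?_
    rintro n ⟨⟨hn, hσn, hsn⟩, hqn, hβn⟩
    have hsn' : ((s n : ℝ) : ℂ) = ε * (σ n : ℂ) ^ k := by exact_mod_cast hsn
    refine ⟨⟨hσn.lt_of_ne fun h => hn ?_, hsn⟩, ?_⟩
    · rw [hsn, ← h, zero_pow hk, mul_zero, ofReal_zero]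
    · simp only [Function.comp_apply] at hqn hβn
      rw [← hqn, ← hβn, ← hsn', hgq, hgq0]
  obtain ⟨ψ, hψ, hψ0, hψη, hψfreq⟩ :=
    exists_analyticAt_frequently_eq_of_pow_eq hk hη hη0 hη' hβ hβ0 (hofReal.comp ht) hpow
  have hψreal : ∀ᶠ x : ℝ in 𝓝 0, (ψ x).im = 0 := by
    refine AnalyticAt.eventually_im_eq_zero (by simpa using hψ) (frequently_nhdsWithin_iff.mpr ?_)
    refine hσ.frequently (hψfreq.mono fun n ⟨⟨hσn, _⟩, hψn⟩ => ⟨?_, hσn.ne'⟩)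
    simp [hψn]
  refine ⟨fun z => ε * z ^ k, ψ, by fun_prop, by simp [hk], hψ, ?_, ?_, σ, hσ, ?_⟩
  · exact hψreal.mono fun x hx => ⟨by simp [← ofReal_pow], hx⟩
  · filter_upwards [hgβ, hψη, (hψ0 ▸ hψ.continuousAt.tendsto).eventually hqη] with z h1 h2 h3
    linear_combination h1 - h3 - h2 + hgq0
  · exact hψfreq.mono fun n ⟨⟨hσn, hsn⟩, hψn⟩ => ⟨hσn, by simp [hsn], hψn⟩

theorem exists_tendsto_zero_eq_mul_exp {ι : Type*} {l : Filter ι} {a : ℂ} (ha : a ≠ 0)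
    {z : ι → ℂ} (hz : ∀ n, ‖z n‖ = ‖a‖) (hza : Tendsto z l (𝓝 a)) :
    ∃ s : ι → ℝ, Tendsto s l (𝓝 0) ∧ ∀ n, z n = a * exp (s n * I) := by
  refine ⟨fun n => arg (z n / a), ?_, fun n => ?_⟩
  · have h := hza.div_const a
    rw [div_self ha] at h
    exact arg_one ▸ (continuousAt_arg one_mem_slitPlane).tendsto.comp h
  · have h := norm_mul_exp_arg_mul_I (z n / a)
    rw [norm_div, hz, div_self (norm_ne_zero_iff.mpr ha), ofReal_one, one_mul] at h
    rw [h, mul_div_cancel₀ _ ha]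

def selfIntersections (φ : ℂ → ℂ) : Set ℂ :=
  {lam | ∃ w₁ w₂ : ℂ, ‖w₁‖ = 1 ∧ ‖w₂‖ = 1 ∧ w₁ ≠ w₂ ∧ φ w₁ = lam ∧ φ w₂ = lam}

theorem norm_mul_exp_mul_I {a u : ℂ} (hu : u.im = 0) : ‖a * exp (u * I)‖ = ‖a‖ := by
  simp [norm_exp, hu]

theorem exists_seq_of_infinite_selfIntersections {φ : ℂ → ℂ}
    (hA : (selfIntersections φ).Infinite) :
    ∃ a b : ℂ, ‖a‖ = 1 ∧ ‖b‖ = 1 ∧ ∃ s t : ℕ → ℝ, Tendsto s atTop (𝓝 0) ∧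
      Tendsto t atTop (𝓝 0) ∧ (∀ n, a * exp (s n * I) ≠ b * exp (t n * I)) ∧
      (∀ n, φ (a * exp (s n * I)) = φ (b * exp (t n * I))) ∧
      ∀ᶠ n in atTop, φ (a * exp (s n * I)) ≠ φ a := by
  choose z w hz hw hzw hφz hφw using fun n => (hA.natEmbedding _ n).2
  obtain ⟨⟨a, b⟩, ⟨ha, hb⟩, ρ, hρ, hlim⟩ :=
    ((isCompact_sphere (0 : ℂ) 1).prod (isCompact_sphere (0 : ℂ) 1)).tendsto_subseq
      (x := fun n => (z n, w n)) fun n => ⟨by simpa using hz n, by simpa using hw n⟩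
  rw [mem_sphere_zero_iff_norm] at ha hb
  obtain ⟨s, hs, hzs⟩ := exists_tendsto_zero_eq_mul_exp (norm_ne_zero_iff.mp (ha ▸ one_ne_zero))
    (fun n => (hz (ρ n)).trans ha.symm) ((continuous_fst.tendsto _).comp hlim)
  obtain ⟨t, ht, hwt⟩ := exists_tendsto_zero_eq_mul_exp (norm_ne_zero_iff.mp (hb ▸ one_ne_zero))
    (fun n => (hw (ρ n)).trans hb.symm) ((continuous_snd.tendsto _).comp hlim)
  have hinj : Function.Injective fun n => φ (z (ρ n)) := fun i j hij =>
    hρ.injective ((hA.natEmbedding _).injective (Subtype.ext (by simpa only [hφz] using hij)))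
  refine ⟨a, b, ha, hb, s, t, hs, ht, fun n => ?_, fun n => ?_, ?_⟩
  · rw [← hzs, ← hwt]; exact hzw _
  · rw [← hzs, ← hwt, hφz, hφw]
  · simp only [← hzs]
    exact Nat.cofinite_eq_atTop ▸ hinj.tendsto_cofinite.eventually (eventually_cofinite_ne (φ a))

theorem exists_isPreconnected_nontrivial_subset_selfIntersections {φ : ℂ → ℂ} {a b : ℂ}
    (hφa : AnalyticAt ℂ φ a) (hφb : AnalyticAt ℂ φ b) (ha : ‖a‖ = 1) (hb : ‖b‖ = 1)
    {s t : ℕ → ℝ} (hs : Tendsto s atTop (𝓝 0)) (ht : Tendsto t atTop (𝓝 0))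
    (hst : ∀ n, a * exp (s n * I) ≠ b * exp (t n * I))
    (hφst : ∀ n, φ (a * exp (s n * I)) = φ (b * exp (t n * I)))
    (hne : ∀ᶠ n in atTop, φ (a * exp (s n * I)) ≠ φ a) :
    ∃ K ⊆ selfIntersections φ, IsPreconnected K ∧ K.Nontrivial := by
  have hexp : ∀ {c : ℂ}, AnalyticAt ℂ φ c → AnalyticAt ℂ (fun z => φ (c * exp (z * I))) 0 :=
    fun h => h.comp_of_eq (by fun_prop) (by simp)
  obtain ⟨S, T, hS, hS0, hT, hreal, hST, σ, hσ, hfreq⟩ :=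
    exists_analyticAt_reparametrization (hexp hφa) (hexp hφb) hs ht hφst (by simpa using hne)
  set Λ : ℂ → ℂ := fun z => φ (a * exp (S z * I))
  have hΛ : AnalyticAt ℂ Λ 0 := (hexp hφa).comp_of_eq hS hS0
  have hofReal : Tendsto ((↑) : ℝ → ℂ) (𝓝 0) (𝓝 0) := continuous_ofReal.tendsto' 0 0 ofReal_zero
  have hD : ∀ᶠ z in 𝓝[≠] 0, a * exp (S z * I) - b * exp (T z * I) ≠ 0 := by
    refine (AnalyticAt.eventually_eq_zero_or_eventually_ne_zero (by fun_prop)).resolve_left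
      fun h => ?_
    obtain ⟨n, ⟨-, hSn, hTn⟩, hn⟩ := (hfreq.and_eventually ((hofReal.comp hσ).eventually h)).exists
    exact hst n (by simpa [hSn, hTn, sub_eq_zero] using hn)
  have hofReal' : Tendsto ((↑) : ℝ → ℂ) (𝓝[>] 0) (𝓝[≠] 0) :=
    tendsto_nhdsWithin_of_tendsto_nhds_of_eventually_within _
      (hofReal.mono_left nhdsWithin_le_nhds) (eventually_nhdsWithin_of_forall fun x hx => by
        simpa using (mem_Ioi.mp hx).ne')
  have hmem : ∀ᶠ x : ℝ in 𝓝[>] 0, Λ x ∈ selfIntersections φ ∧ ContinuousAt Λ x := by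
    filter_upwards [hofReal'.eventually hD, nhdsWithin_le_nhds hreal,
      hofReal'.eventually (eventually_nhdsWithin_of_eventually_nhds hST),
      hofReal'.eventually (eventually_nhdsWithin_of_eventually_nhds hΛ.eventually_analyticAt)]
      with x hDx ⟨hSx, hTx⟩ hSTx hΛx
    exact ⟨⟨_, _, by rw [norm_mul_exp_mul_I hSx, ha], by rw [norm_mul_exp_mul_I hTx, hb],
      sub_ne_zero.mp hDx, rfl, hSTx.symm⟩, hΛx.continuousAt⟩
  obtain ⟨r, hr, hsub⟩ := mem_nhdsGT_iff_exists_Ioo_subset.mp hmem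
  refine ⟨(fun x : ℝ => Λ x) '' Ioo 0 r, image_subset_iff.mpr fun x hx => (hsub hx).1,
    isPreconnected_Ioo.image _ fun x hx =>
      ((hsub hx).2.comp continuous_ofReal.continuousAt).continuousWithinAt, ?_⟩
  obtain ⟨n, ⟨hσn, hSn, -⟩, hσr, hn⟩ :=
    (hfreq.and_eventually ((hσ.eventually (Iio_mem_nhds hr)).and hne)).exists
  refine Set.Nontrivial.image_Ioo_of_tendsto (c := Λ 0)
    ((hΛ.continuousAt.tendsto.comp hofReal).mono_left nhdsWithin_le_nhds) ⟨hσn, hσr⟩ ?_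
  simpa [Λ, hSn, hS0] using hn

theorem self_intersections_finite_or_continuum
    (U : Set ℂ) (hU : IsOpen U) (hUD : Metric.closedBall (0:ℂ) 1 ⊆ U)
    (φ : ℂ → ℂ) (hφ : DifferentiableOn ℂ φ U) :
    let A : Set ℂ := {lam | ∃ w₁ w₂ : ℂ, ‖w₁‖ = 1 ∧ ‖w₂‖ = 1 ∧ w₁ ≠ w₂ ∧
      φ w₁ = lam ∧ φ w₂ = lam}
    A.Finite ∨ Cardinal.mk A = Cardinal.continuum := by
  intro A
  refine or_iff_not_imp_left.mpr fun hA =>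
    le_antisymm ((mk_set_le A).trans_eq mk_complex) ?_
  obtain ⟨a, b, ha, hb, s, t, hs, ht, hst, hφst, hne⟩ :=
    exists_seq_of_infinite_selfIntersections (φ := φ) hA
  have hφan : ∀ {c : ℂ}, ‖c‖ = 1 → AnalyticAt ℂ φ c := fun hc =>
    hφ.analyticAt (hU.mem_nhds (hUD (mem_closedBall_zero_iff.mpr hc.le)))
  obtain ⟨K, hKA, hK, hKnt⟩ := exists_isPreconnected_nontrivial_subset_selfIntersections
    (hφan ha) (hφan hb) ha hb hs ht hst hφst hne
  exact (hK.continuum_le_mk hKnt).trans (mk_le_mk_of_subset hKA)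
end

section
/- Let Q be a polynomial of prime degree q with no zeros in the closed unit disk, and let P be a nonconstant polynomial with deg P < q having at least one zero in the open unit disk 𝔻. Then R = P/Q cannot be written as R = M ∘ B on 𝔻 with M a Möbius transformation and B a finite Blaschke product of order q. -/
open Complex

/-!
Write the Blaschke product as `B = N / D` with polynomials `N = γ ∏ (αⱼ - z)` and
`D = ∏ (1 - ᾱⱼ z)` of degree at most `q`; then on the disk `M ∘ B = T / S` with `T = a N + b D`
and `S = c N + d D`, so `P S = Q T` as polynomials. At a zero `z₀` of `P` in the disk `T(z₀) = 0`,
hence `T = a (N - B(z₀) D)`. The coefficients of `z^q` in `N` and `B(z₀) D` are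
`(-1)^q γ` and `(-1)^q B(z₀) ∏ ᾱⱼ`, which cannot cancel because `|B(z₀)| < 1 = |γ|`; so `T` has
degree `q`, and `deg P + deg S = 2q` contradicts `deg P < q`, `deg S ≤ q`.
-/

open ComplexConjugate Polynomial

theorem Finset.prod_lt_one_of_nonneg {ι R : Type*} [CommSemiring R] [LinearOrder R]
    [IsStrictOrderedRing R] {s : Finset ι} {f : ι → R} (h0 : ∀ i ∈ s, 0 ≤ f i)
    (h1 : ∀ i ∈ s, f i < 1) (hs : s.Nonempty) : ∏ i ∈ s, f i < 1 := by
  classical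
  obtain ⟨i, hi⟩ := hs
  rw [← Finset.mul_prod_erase s f hi]
  exact mul_lt_one_of_nonneg_of_lt_one_left (h0 i hi) (h1 i hi)
    (Finset.prod_le_one (fun j hj => h0 j (Finset.mem_of_mem_erase hj))
      fun j hj => (h1 j (Finset.mem_of_mem_erase hj)).le)

theorem moebius_div_eq_div {K : Type*} [Field K] {e : K} (he : e ≠ 0) (a b c d n : K) :
    (a * (n / e) + b) / (c * (n / e) + d) = (a * n + b * e) / (c * n + d * e) := by
  rw [← mul_div_assoc, ← mul_div_assoc, div_add' _ _ _ he, div_add' _ _ _ he,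
    div_div_div_cancel_right₀ he]

theorem Polynomial.natDegree_prod_le_card_mul {ι R : Type*} [CommSemiring R] {s : Finset ι}
    {f : ι → R[X]} {n : ℕ} (h : ∀ i ∈ s, (f i).natDegree ≤ n) :
    (∏ i ∈ s, f i).natDegree ≤ s.card * n :=
  (natDegree_prod_le s f).trans (by simpa using Finset.sum_le_card_nsmul s _ n h)

theorem Polynomial.mul_eq_mul_of_eval_div_eq_div {K : Type*} [Field K] {P Q S T : K[X]}
    {s : Set K} (hs : s.Infinite) (hP : P ≠ 0) (hQ : ∀ z ∈ s, Q.eval z ≠ 0)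
    (h : ∀ z ∈ s, P.eval z / Q.eval z = T.eval z / S.eval z) : P * S = Q * T := by
  have hS : S ≠ 0 := by
    rintro rfl
    refine hP (eq_zero_of_infinite_isRoot P (hs.mono fun z hz => ?_))
    simpa [hQ z hz] using h z hz
  rw [← sub_eq_zero]
  refine eq_zero_of_infinite_isRoot _ ((hs.sdiff (finite_setOfPred_isRoot hS)).mono ?_)
  rintro z ⟨hz, hSz⟩
  have := (div_eq_div_iff (hQ z hz) hSz).mp (h z hz)
  simp only [Set.mem_ofPred_eq, IsRoot, eval_sub, eval_mul]
  linear_combination this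

theorem one_sub_conj_mul_ne_zero {α z : ℂ} (hα : ‖α‖ < 1) (hz : ‖z‖ ≤ 1) :
    1 - conj α * z ≠ 0 := by
  refine sub_ne_zero.mpr fun h => ?_
  have : ‖conj α * z‖ < 1 := by
    rw [norm_mul, Complex.norm_conj]
    exact mul_lt_one_of_nonneg_of_lt_one_left (norm_nonneg α) hα hz
  simp [← h] at this

theorem norm_blaschkeFactor_lt_one {α z : ℂ} (hα : ‖α‖ < 1) (hz : ‖z‖ < 1) :
    ‖(α - z) / (1 - conj α * z)‖ < 1 := by
  rw [norm_div, div_lt_one (norm_pos_iff.mpr (one_sub_conj_mul_ne_zero hα hz.le)),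
    ← sq_lt_sq₀ (norm_nonneg _) (norm_nonneg _), Complex.sq_norm, Complex.sq_norm]
  have key : normSq (1 - conj α * z) - normSq (α - z) = (1 - normSq α) * (1 - normSq z) := by
    simp only [normSq_apply, sub_re, sub_im, mul_re, mul_im, conj_re, conj_im, one_re, one_im]
    ring
  have hα2 : normSq α < 1 := by
    rw [normSq_eq_norm_sq]; exact pow_lt_one₀ (norm_nonneg α) hα two_ne_zero
  have hz2 : normSq z < 1 := by
    rw [normSq_eq_norm_sq]; exact pow_lt_one₀ (norm_nonneg z) hz two_ne_zero
  linarith [mul_pos (sub_pos.mpr hα2) (sub_pos.mpr hz2)]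

theorem norm_blaschke_lt_one {ι : Type*} [Fintype ι] [Nonempty ι] {γ z : ℂ} {α : ι → ℂ}
    (hγ : ‖γ‖ ≤ 1) (hα : ∀ j, ‖α j‖ < 1) (hz : ‖z‖ < 1) :
    ‖γ * ∏ j, (α j - z) / (1 - conj (α j) * z)‖ < 1 := by
  rw [norm_mul, norm_prod]
  exact mul_lt_one_of_nonneg_of_lt_one_right hγ (Finset.prod_nonneg fun _ _ => norm_nonneg _)
    (Finset.prod_lt_one_of_nonneg (fun _ _ => norm_nonneg _)
      (fun j _ => norm_blaschkeFactor_lt_one (hα j) hz) Finset.univ_nonempty)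

section BlaschkePolynomials

variable {ι : Type*} [Fintype ι]

noncomputable def blaschkeNumerator (γ : ℂ) (α : ι → ℂ) : ℂ[X] :=
  C γ * ∏ j, (C (α j) - X)

noncomputable def blaschkeDenominator (α : ι → ℂ) : ℂ[X] :=
  ∏ j, (1 - C (conj (α j)) * X)

@[simp]
theorem eval_blaschkeNumerator (γ : ℂ) (α : ι → ℂ) (z : ℂ) :
    (blaschkeNumerator γ α).eval z = γ * ∏ j, (α j - z) := by
  simp [blaschkeNumerator, eval_prod]

@[simp]
theorem eval_blaschkeDenominator (α : ι → ℂ) (z : ℂ) :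
    (blaschkeDenominator α).eval z = ∏ j, (1 - conj (α j) * z) := by
  simp [blaschkeDenominator, eval_prod]

theorem blaschke_eq_eval_div (γ : ℂ) (α : ι → ℂ) (z : ℂ) :
    γ * ∏ j, (α j - z) / (1 - conj (α j) * z) =
      (blaschkeNumerator γ α).eval z / (blaschkeDenominator α).eval z := by
  rw [eval_blaschkeNumerator, eval_blaschkeDenominator, Finset.prod_div_distrib, mul_div_assoc]

theorem eval_blaschkeDenominator_ne_zero {α : ι → ℂ} (hα : ∀ j, ‖α j‖ < 1) {z : ℂ}
    (hz : ‖z‖ ≤ 1) : (blaschkeDenominator α).eval z ≠ 0 := by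
  rw [eval_blaschkeDenominator]
  exact Finset.prod_ne_zero_iff.mpr fun j _ => one_sub_conj_mul_ne_zero (hα j) hz

theorem moebius_blaschke_eq_eval_div {γ : ℂ} {α : ι → ℂ} (hα : ∀ j, ‖α j‖ < 1) {z : ℂ}
    (hz : ‖z‖ ≤ 1) (a b c d : ℂ) :
    (a * (γ * ∏ j, (α j - z) / (1 - conj (α j) * z)) + b) /
        (c * (γ * ∏ j, (α j - z) / (1 - conj (α j) * z)) + d) =
      (C a * blaschkeNumerator γ α + C b * blaschkeDenominator α).eval z /
        (C c * blaschkeNumerator γ α + C d * blaschkeDenominator α).eval z := by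
  rw [blaschke_eq_eval_div, moebius_div_eq_div (eval_blaschkeDenominator_ne_zero hα hz)]
  simp only [eval_add, eval_mul, eval_C]

theorem natDegree_blaschkeNumerator_le (γ : ℂ) (α : ι → ℂ) :
    (blaschkeNumerator γ α).natDegree ≤ Fintype.card ι := by
  refine (natDegree_C_mul_le _ _).trans
    ((natDegree_prod_le_card_mul (n := 1) fun j _ => ?_).trans ?_)
  · compute_degree
  · simp

theorem natDegree_blaschkeDenominator_le (α : ι → ℂ) :
    (blaschkeDenominator α).natDegree ≤ Fintype.card ι := by
  refine (natDegree_prod_le_card_mul (n := 1) fun j _ => ?_).trans ?_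
  · compute_degree
  · simp

theorem natDegree_C_mul_blaschkeNumerator_add_C_mul_blaschkeDenominator_le (a b γ : ℂ)
    (α : ι → ℂ) :
    (C a * blaschkeNumerator γ α + C b * blaschkeDenominator α).natDegree ≤ Fintype.card ι :=
  natDegree_add_le_of_degree_le
    ((natDegree_C_mul_le _ _).trans (natDegree_blaschkeNumerator_le γ α))
    ((natDegree_C_mul_le _ _).trans (natDegree_blaschkeDenominator_le α))

theorem coeff_blaschkeNumerator_card (γ : ℂ) (α : ι → ℂ) :
    (blaschkeNumerator γ α).coeff (Fintype.card ι) = γ * (-1) ^ Fintype.card ι := by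
  have := coeff_prod_of_natDegree_le (s := Finset.univ) (fun j => C (α j) - X) 1
    fun j _ => by compute_degree
  rw [blaschkeNumerator, coeff_C_mul]
  congr 1
  simpa using this

theorem coeff_blaschkeDenominator_card (α : ι → ℂ) :
    (blaschkeDenominator α).coeff (Fintype.card ι) = (-1) ^ Fintype.card ι * ∏ j, conj (α j) := by
  have := coeff_prod_of_natDegree_le (s := Finset.univ) (fun j => 1 - C (conj (α j)) * X) 1
    fun j _ => by compute_degree
  rw [Finset.card_univ, mul_one] at this
  rw [blaschkeDenominator, this]
  simp [coeff_one, Finset.prod_neg]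

theorem natDegree_blaschkeNumerator_sub_C_mul_blaschkeDenominator {γ w : ℂ} {α : ι → ℂ}
    (hγ : ‖γ‖ = 1) (hα : ∀ j, ‖α j‖ < 1) (hw : ‖w‖ < 1) :
    (blaschkeNumerator γ α - C w * blaschkeDenominator α).natDegree = Fintype.card ι := by
  refine le_antisymm ?_ (le_natDegree_of_ne_zero ?_)
  · simpa [sub_eq_add_neg] using
      natDegree_C_mul_blaschkeNumerator_add_C_mul_blaschkeDenominator_le 1 (-w) γ α
  have hlt : ‖w * ∏ j, conj (α j)‖ < ‖γ‖ := by
    rw [hγ, norm_mul, norm_prod]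
    refine mul_lt_one_of_nonneg_of_lt_one_left (norm_nonneg w) hw
      (Finset.prod_le_one (fun _ _ => norm_nonneg _) fun j _ => ?_)
    rw [Complex.norm_conj]
    exact (hα j).le
  rw [coeff_sub, coeff_C_mul, coeff_blaschkeNumerator_card, coeff_blaschkeDenominator_card]
  calc γ * (-1) ^ Fintype.card ι - w * ((-1) ^ Fintype.card ι * ∏ j, conj (α j))
      = (-1) ^ Fintype.card ι * (γ - w * ∏ j, conj (α j)) := by ring
    _ ≠ 0 := mul_ne_zero (by simp) (sub_ne_zero.mpr (ne_of_apply_ne norm hlt.ne'))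

theorem natDegree_C_mul_blaschkeNumerator_add_C_mul_blaschkeDenominator [Nonempty ι]
    {a b γ z₀ : ℂ} {α : ι → ℂ} (hγ : ‖γ‖ = 1) (hα : ∀ j, ‖α j‖ < 1) (hz₀ : ‖z₀‖ < 1)
    (hab : a ≠ 0 ∨ b ≠ 0)
    (h : (C a * blaschkeNumerator γ α + C b * blaschkeDenominator α).eval z₀ = 0) :
    (C a * blaschkeNumerator γ α + C b * blaschkeDenominator α).natDegree = Fintype.card ι := by
  have hD := eval_blaschkeDenominator_ne_zero hα hz₀.le
  simp only [eval_add, eval_mul, eval_C] at h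
  have ha : a ≠ 0 := by
    rintro rfl
    have hb : b ≠ 0 := by simpa using hab
    rw [zero_mul, zero_add] at h
    exact hD ((mul_eq_zero.mp h).resolve_left hb)
  have hw : -b / a = γ * ∏ j, (α j - z₀) / (1 - conj (α j) * z₀) := by
    rw [blaschke_eq_eval_div, div_eq_div_iff ha hD]
    linear_combination -h
  have hsplit : C a * blaschkeNumerator γ α + C b * blaschkeDenominator α =
      C a * (blaschkeNumerator γ α - C (-b / a) * blaschkeDenominator α) := by
    rw [mul_sub, ← mul_assoc, ← C_mul, mul_div_cancel₀ _ ha, C_neg]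
    ring
  rw [hsplit, natDegree_C_mul ha, natDegree_blaschkeNumerator_sub_C_mul_blaschkeDenominator hγ hα
    (hw ▸ norm_blaschke_lt_one hγ.le hα hz₀)]

end BlaschkePolynomials

theorem prime_degree_rational_not_moebius_blaschke_general
    (P Q : Polynomial ℂ)
    (hQ : ∀ z : ℂ, ‖z‖ ≤ 1 → Q.eval z ≠ 0)
    (hP : 0 < P.natDegree) (hdeg : P.natDegree < Q.natDegree)
    (hzero : ∃ z : ℂ, ‖z‖ < 1 ∧ P.eval z = 0) :
    ¬ ∃ (M B : ℂ → ℂ) (a b c d cc : ℂ) (α : Fin Q.natDegree → ℂ),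
        a * d - b * c ≠ 0 ∧
        (∀ z : ℂ, M z = (a * z + b) / (c * z + d)) ∧
        ‖cc‖ = 1 ∧ (∀ j, ‖α j‖ < 1) ∧
        (∀ z : ℂ, B z = cc * ∏ j, (α j - z) / (1 - (starRingEnd ℂ) (α j) * z)) ∧
        (∀ z : ℂ, ‖z‖ < 1 → P.eval z / Q.eval z = M (B z)) := by
  rintro ⟨M, B, a, b, c, d, γ, α, hdet, hM, hγ, hα, hB, hR⟩
  obtain ⟨z₀, hz₀, hPz₀⟩ := hzero
  have : Nonempty (Fin Q.natDegree) := Fin.pos_iff_nonempty.mp (hP.trans hdeg)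
  set T := C a * blaschkeNumerator γ α + C b * blaschkeDenominator α
  set S := C c * blaschkeNumerator γ α + C d * blaschkeDenominator α
  have hPS : P * S = Q * T := by
    refine mul_eq_mul_of_eval_div_eq_div (infinite_of_mem_nhds 0 (Metric.ball_mem_nhds 0 one_pos))
      (ne_zero_of_natDegree_gt hP) (fun z hz => hQ z (mem_ball_zero_iff.mp hz).le) fun z hz => ?_
    rw [mem_ball_zero_iff] at hz
    rw [hR z hz, hM, hB, moebius_blaschke_eq_eval_div hα hz.le]
  have hTz₀ : T.eval z₀ = 0 := by
    simpa [hPz₀, hQ z₀ hz₀.le] using (congrArg (eval z₀) hPS).symm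
  have hab : a ≠ 0 ∨ b ≠ 0 := by
    by_contra! h
    simp [h.1, h.2] at hdet
  have hT : T.natDegree = Q.natDegree := by
    simpa using natDegree_C_mul_blaschkeNumerator_add_C_mul_blaschkeDenominator hγ hα hz₀ hab hTz₀
  have hS : S.natDegree ≤ Q.natDegree := by
    simpa using natDegree_C_mul_blaschkeNumerator_add_C_mul_blaschkeDenominator_le c d γ α
  have hdegPS := natDegree_mul_le (p := P) (q := S)
  rw [hPS, natDegree_mul (ne_zero_of_natDegree_gt hdeg) (ne_zero_of_natDegree_gt (hT ▸ hdeg)), hT]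
    at hdegPS
  omega

theorem prime_degree_rational_not_moebius_blaschke
    (P Q : Polynomial ℂ) (hq : Nat.Prime Q.natDegree)
    (hQ : ∀ z : ℂ, ‖z‖ ≤ 1 → Q.eval z ≠ 0)
    (hP : 0 < P.natDegree) (hdeg : P.natDegree < Q.natDegree)
    (hzero : ∃ z : ℂ, ‖z‖ < 1 ∧ P.eval z = 0) :
    ¬ ∃ (M B : ℂ → ℂ) (a b c d cc : ℂ) (α : Fin Q.natDegree → ℂ),
        a * d - b * c ≠ 0 ∧
        (∀ z : ℂ, M z = (a * z + b) / (c * z + d)) ∧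
        ‖cc‖ = 1 ∧ (∀ j, ‖α j‖ < 1) ∧
        (∀ z : ℂ, B z = cc * ∏ j, (α j - z) / (1 - (starRingEnd ℂ) (α j) * z)) ∧
        (∀ z : ℂ, ‖z‖ < 1 → P.eval z / Q.eval z = M (B z)) :=
  prime_degree_rational_not_moebius_blaschke_general P Q hQ hP hdeg hzero
end
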